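/- Let F be a field of characteristic p > 0 and (b_1,m_1),…,(b_r,m_r) ∈ F^* × ℕ_{>0}. Then: (i) if [F(b_1^{1/p^{m_1}},…,b_r^{1/p^{m_r}}) : F] = p, there exist j ∈ {1,…,r} and c_j ∈ F∖F^p with b_j = c_j^{p^{m_j−1}} and K_F((b_1,m_1),…,(b_r,m_r)) equals the image of c_j·d(Ω_F^{n-1}) in H_p^{n+1}(F); (ii) if max{m_1,…,m_r} = 1, then K_F((b_1,m_1),…,(b_r,m_r)) = Σ_{i=1}^r (image of b_i·d(Ω_F^{n-1}) in H_p^{n+1}(F)). -/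

import Mathlib

noncomputable section

/-- The full algebra of absolute differential forms of a field `F`:
the exterior algebra of the `F`-module of absolute Kähler differentials `Ω[F⁄ℤ]`. -/
abbrev DF (F : Type*) [Field F] : Type _ :=
  ExteriorAlgebra F (KaehlerDifferential ℤ F)

/-- `Ω_F^n`, the space of differential `n`-forms, as a submodule of `DF F`. -/
def omegaPow (F : Type*) [Field F] (n : ℕ) : Submodule F (DF F) :=
  LinearMap.range (ExteriorAlgebra.ι F :
    KaehlerDifferential ℤ F →ₗ[F] DF F) ^ n

/-- `Ω_F^{n-1}`, with the convention `Ω_F^{-1} = 0`. -/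
def omegaPred (F : Type*) [Field F] : ℕ → Submodule F (DF F)
  | 0 => ⊥
  | n + 1 => omegaPow F n

/-- The exact 1-form `d a` of an element `a ∈ F`. -/
def dForm (F : Type*) [Field F] (a : F) : DF F :=
  ExteriorAlgebra.ι F (KaehlerDifferential.D ℤ F a)

/-- The logarithmic 1-form `da/a` of an element `a ∈ F`. -/
def dLog (F : Type*) [Field F] (a : F) : DF F :=
  ExteriorAlgebra.ι F (a⁻¹ • KaehlerDifferential.D ℤ F a)

/-- The logarithmic `n`-form `(dx₁/x₁) ∧ … ∧ (dxₙ/xₙ)`. -/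
def logForm (F : Type*) [Field F] {n : ℕ} (x : Fin n → F) : DF F :=
  (List.ofFn fun i => dLog F (x i)).prod

/-- The exterior derivative `d` together with the (`p`-basis dependent) additive map `s_p`
on the differential forms of a field `F` of characteristic `p`. -/
structure DiffStr (p : ℕ) (F : Type*) [Field F] where
  d : DF F →+ DF F
  sp : DF F →+ DF F
  d_grade : ∀ n : ℕ, ∀ ω ∈ omegaPow F n, d ω ∈ omegaPow F (n + 1)
  d_d : ∀ ω : DF F, d (d ω) = 0
  d_one : d 1 = 0
  d_smul : ∀ (a : F) (ω : DF F), d (a • ω) = dForm F a * ω + a • d ω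
  sp_grade : ∀ n : ℕ, ∀ ω ∈ omegaPow F n, sp ω ∈ omegaPow F n
  sp_log : ∀ (n : ℕ) (a : F) (x : Fin n → F),
      ∃ η ∈ omegaPred F n, sp (a • logForm F x) = a ^ p • logForm F x + d η

/-- The Artin–Schreier map `℘ = s_p − id` on differential forms. -/
def asMap {p : ℕ} {F : Type*} [Field F] (S : DiffStr p F) : DF F →+ DF F :=
  S.sp - AddMonoidHom.id (DF F)

/-- The subgroup `℘Ω_F^n + dΩ_F^{n-1}` of `Ω_F^n`; the group `H_p^{n+1}(F)` is the quotient
of `Ω_F^n` by this subgroup. -/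
def hRel {p : ℕ} {F : Type*} [Field F] (S : DiffStr p F) (n : ℕ) : AddSubgroup (DF F) :=
  ((omegaPow F n).toAddSubgroup.map (asMap S)) ⊔ ((omegaPred F n).toAddSubgroup.map S.d)

/-- The `t`-th iterate `v ↦ v^{[p^t]}` of the map `s_p`. -/
def spIter {p : ℕ} {F : Type*} [Field F] (S : DiffStr p F) (t : ℕ) : DF F → DF F :=
  (fun x => S.sp x)^[t]

/-- `ν_n(F) = ker(℘ : Ω_F^n → Ω_F^n/dΩ_F^{n-1})`. -/
def nuSet {p : ℕ} {F : Type*} [Field F] (S : DiffStr p F) (n : ℕ) : Set (DF F) :=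
  { η | η ∈ omegaPow F n ∧ ∃ z ∈ omegaPred F n, S.sp η - η = S.d z }

/-- Restriction of differential forms along a field extension `E/F`. -/
structure DiffRes (p : ℕ) (F E : Type*) [Field F] [Field E] [Algebra F E]
    (SF : DiffStr p F) (SE : DiffStr p E) where
  res : DF F →+ DF E
  res_one : res 1 = 1
  res_mul : ∀ x y : DF F, res (x * y) = res x * res y
  res_smul : ∀ (a : F) (ω : DF F), res (a • ω) = algebraMap F E a • res ω
  res_dForm : ∀ a : F, res (dForm F a) = dForm E (algebraMap F E a)
  res_grade : ∀ n : ℕ, ∀ ω ∈ omegaPow F n, res ω ∈ omegaPow E n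
  res_d : ∀ ω : DF F, res (SF.d ω) = SE.d (res ω)

/-- The generators of the group `K_F((b₁,m₁),…,(b_r,m_r)) ⊆ H_p^{n+1}(F)`:
(i) the forms `bᵢ·dz` with `z ∈ Ω_F^{n-1}`, and
(ii) the forms `b₁^{k(t,1)}⋯b_r^{k(t,r)}·(dv)^{[p^t]}` with `v ∈ Ω_F^{n-1}`,
`t = 1,…,max(m)−1`, `0 ≤ k(t,i) < p^t` and `max{1, p^{t−mᵢ+1}} ∣ k(t,i)`. -/
def kGens {p : ℕ} {F : Type*} [Field F] (S : DiffStr p F) {r : ℕ}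
    (b : Fin r → F) (m : Fin r → ℕ) (n : ℕ) : Set (DF F) :=
  { x | ∃ i : Fin r, ∃ z ∈ omegaPred F n, x = b i • S.d z } ∪
  { x | ∃ (t : ℕ) (k : Fin r → ℕ), 0 < t ∧ t < Finset.univ.sup m ∧
      (∀ i, k i < p ^ t ∧ p ^ (t + 1 - m i) ∣ k i) ∧
      ∃ v ∈ omegaPred F n, x = (∏ i, b i ^ k i) • spIter S t (S.d v) }

/-- The preimage in `Ω_F^n` of the subgroup `K_F((b₁,m₁),…,(b_r,m_r))` of `H_p^{n+1}(F)`: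
the subgroup generated by `℘Ω_F^n + dΩ_F^{n-1}` together with the generators above.
Two subgroups of `H_p^{n+1}(F)` agree iff their preimages agree. -/
def kGroup {p : ℕ} {F : Type*} [Field F] (S : DiffStr p F) {r : ℕ}
    (b : Fin r → F) (m : Fin r → ℕ) (n : ℕ) : AddSubgroup (DF F) :=
  AddSubgroup.closure ((hRel S n : Set (DF F)) ∪ kGens S b m n)

/-!
Everything rests on two congruences modulo `℘Ω_F^n + dΩ_F^{n-1}`: `a^{p^t} w^{[p^t]} ≡ a w`
(the map `s_p` is `p`-semilinear up to exact forms, as one sees on logarithmic forms), and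
`F^p[c] · dΩ_F^{n-1} ⊆ c · dΩ_F^{n-1} + dΩ_F^{n-1}`, because
`c^{k+1} dz = (k+1) c d(c^k z) - k d(c^{k+1} z)`.

If `[E : F] = p`, then `E/F` is purely inseparable of degree `p`, so `E^p ⊆ F`; any
`x = βⱼ ∉ F` generates `E`, and `c := x^p` lies in `F ∖ F^p` with `E^p = F^p[c]`. Thus each
`bᵢ = (βᵢ^p)^{p^{mᵢ-1}}` is a `p^{mᵢ-1}`-th power of an element of `F^p[c]`, every coefficient
`∏ bᵢ^{k(t,i)}` is the `p^t`-th power of some `a ∈ F^p[c]`, and the congruences send each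
generator of `K_F` into `c · dΩ_F^{n-1}`. Conversely `c dz ≡ bⱼ (dz)^{[p^{mⱼ-1}]}`, a generator of `K_F`.
-/

theorem Submonoid.exists_eq_pow_mul_pow_of_mem_closure {M : Type*} [CommMonoid M] {p : ℕ}
    {c y : M} (hy : y ∈ Submonoid.closure (Set.range (· ^ p) ∪ {c})) :
    ∃ e k, y = e ^ p * c ^ k := by
  induction hy using Submonoid.closure_induction with
  | mem y hy =>
    rcases hy with ⟨e, rfl⟩ | rfl
    exacts [⟨e, 0, by simp⟩, ⟨1, 1, by simp⟩]
  | one => exact ⟨1, 0, by simp⟩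
  | mul y y' _ _ hy hy' =>
    obtain ⟨e, k, rfl⟩ := hy
    obtain ⟨e', k', rfl⟩ := hy'
    exact ⟨e * e', k + k', by rw [mul_pow, pow_add, mul_mul_mul_comm]⟩

theorem Nat.pow_dvd_mul_pow_sub_one {p t m k : ℕ} (h : p ^ (t + 1 - m) ∣ k) :
    p ^ t ∣ k * p ^ (m - 1) :=
  (pow_dvd_pow p (by omega)).trans (pow_add p _ _ ▸ mul_dvd_mul_right h _)

section Forms

variable {F : Type*} [Field F]

theorem logForm_succ {n : ℕ} (x : Fin (n + 1) → F) :
    logForm F x = dLog F (x 0) * logForm F (Fin.tail x) := by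
  simp [logForm, List.ofFn_succ, Fin.tail]

theorem logForm_mem_omegaPow {n : ℕ} (x : Fin n → F) : logForm F x ∈ omegaPow F n := by
  induction n with
  | zero => simp [logForm, omegaPow]
  | succ n ih =>
    rw [logForm_succ, omegaPow, pow_succ']
    exact Submodule.mul_mem_mul ⟨_, rfl⟩ (ih _)

theorem dForm_pow (a : F) (k : ℕ) : dForm F (a ^ k) = ((k : F) * a ^ (k - 1)) • dForm F a := by
  simp only [dForm, Derivation.leibniz_pow, map_nsmul, map_smul]
  rw [← Nat.cast_smul_eq_nsmul F, smul_smul]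

theorem smul_dForm_pow (a : F) (k : ℕ) : a • dForm F (a ^ k) = ((k : F) * a ^ k) • dForm F a := by
  rw [dForm_pow, smul_smul]
  cases k with
  | zero => simp
  | succ k => rw [Nat.add_sub_cancel, pow_succ]; ring_nf

theorem dForm_pow_char (p : ℕ) [CharP F p] (e : F) : dForm F (e ^ p) = 0 := by
  rw [dForm_pow, CharP.cast_eq_zero F p, zero_mul, zero_smul]

theorem range_ι_eq_span_dForm :
    LinearMap.range (ExteriorAlgebra.ι F : KaehlerDifferential ℤ F →ₗ[F] DF F) =
      Submodule.span F (Set.range (dForm F)) := by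
  rw [LinearMap.range_eq_map, ← KaehlerDifferential.span_range_derivation, Submodule.map_span,
    ← Set.range_comp]
  rfl

theorem dForm_mul_logForm_mem_span {n : ℕ} (a : F) (x : Fin n → F) :
    dForm F a * logForm F x ∈ Submodule.span F (Set.range (logForm F (n := n + 1))) := by
  rcases eq_or_ne a 0 with rfl | ha
  · simp [dForm]
  · have hlog : dForm F a * logForm F x = a • logForm F (Fin.cons a x : Fin (n + 1) → F) := by
      rw [logForm_succ, Fin.cons_zero, Fin.tail_cons, dLog, map_smul, smul_mul_assoc, smul_smul,
        mul_inv_cancel₀ ha, one_smul, dForm]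
    rw [hlog]
    exact Submodule.smul_mem _ _ (Submodule.subset_span ⟨_, rfl⟩)

theorem omegaPow_le_span_logForm (n : ℕ) :
    omegaPow F n ≤ Submodule.span F (Set.range (logForm F (n := n))) := by
  induction n with
  | zero =>
    rw [omegaPow, pow_zero, Submodule.one_eq_span, Submodule.span_le, Set.singleton_subset_iff]
    exact Submodule.subset_span ⟨Fin.elim0, by simp [logForm]⟩
  | succ n ih =>
    rw [omegaPow, pow_succ', Submodule.mul_le]
    intro u hu w hw
    rw [range_ι_eq_span_dForm] at hu
    have huw := Submodule.mul_mem_mul hu (ih hw)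
    rw [Submodule.span_mul_span] at huw
    refine Submodule.span_le.2 ?_ huw
    rintro _ ⟨_, ⟨a, rfl⟩, _, ⟨x, rfl⟩, rfl⟩
    exact dForm_mul_logForm_mem_span a x

end Forms

namespace DiffStr

variable {p : ℕ} {F : Type*} [Field F] (S : DiffStr p F)

theorem d_mem_omegaPow {n : ℕ} {z : DF F} (hz : z ∈ omegaPred F n) : S.d z ∈ omegaPow F n := by
  cases n with
  | zero => simp_all [omegaPred, omegaPow]
  | succ n => exact S.d_grade n z hz

theorem spIter_succ (t : ℕ) (w : DF F) : spIter S (t + 1) w = S.sp (spIter S t w) :=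
  Function.iterate_succ_apply' _ _ _

theorem spIter_mem_omegaPow {n : ℕ} {w : DF F} (hw : w ∈ omegaPow F n) (t : ℕ) :
    spIter S t w ∈ omegaPow F n := by
  induction t with
  | zero => exact hw
  | succ t ih => rw [spIter_succ]; exact S.sp_grade n _ ih

theorem d_pow_char_smul [CharP F p] (a : F) (z : DF F) : S.d (a ^ p • z) = a ^ p • S.d z := by
  rw [S.d_smul, dForm_pow_char p, zero_mul, zero_add]

theorem asMap_add_d_mem_hRel {n : ℕ} {ζ ξ : DF F} (hζ : ζ ∈ omegaPow F n)
    (hξ : ξ ∈ omegaPred F n) : asMap S ζ + S.d ξ ∈ hRel S n :=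
  add_mem (AddSubgroup.mem_sup_left ⟨ζ, hζ, rfl⟩) (AddSubgroup.mem_sup_right ⟨ξ, hξ, rfl⟩)

theorem pow_char_smul_sp_sub_smul_mem_hRel [CharP F p] {n : ℕ} {w : DF F}
    (hw : w ∈ omegaPow F n) (a : F) : a ^ p • S.sp w - a • w ∈ hRel S n := by
  obtain ⟨k, u, L, rfl⟩ := Submodule.mem_span_set'.1 (omegaPow_le_span_logForm n hw)
  simp only [Finset.smul_sum, map_sum, ← Finset.sum_sub_distrib]
  refine sum_mem fun i _ => ?_
  obtain ⟨x, hx⟩ := (L i).2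
  rw [← hx]
  obtain ⟨η, hη, hsp⟩ := S.sp_log n (u i) x
  obtain ⟨η', hη', hsp'⟩ := S.sp_log n (a * u i) x
  have key : a ^ p • S.sp (u i • logForm F x) - a • u i • logForm F x =
      asMap S ((a * u i) • logForm F x) + S.d (a ^ p • η - η') := by
    rw [asMap, AddMonoidHom.sub_apply, hsp', hsp, map_sub, d_pow_char_smul]
    simp only [smul_add, smul_smul, mul_pow, AddMonoidHom.id_apply]
    abel
  rw [key]
  exact S.asMap_add_d_mem_hRel (Submodule.smul_mem _ _ (logForm_mem_omegaPow x))
    (sub_mem (Submodule.smul_mem _ _ hη) hη')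

theorem pow_smul_spIter_sub_smul_mem_hRel [CharP F p] {n : ℕ} {w : DF F}
    (hw : w ∈ omegaPow F n) (a : F) (t : ℕ) : a ^ p ^ t • spIter S t w - a • w ∈ hRel S n := by
  induction t with
  | zero => simp [spIter]
  | succ t ih =>
    have step := S.pow_char_smul_sp_sub_smul_mem_hRel (S.spIter_mem_omegaPow hw t) (a ^ p ^ t)
    convert add_mem step ih using 1
    rw [spIter_succ, pow_succ, pow_mul]
    abel

theorem pow_succ_smul_d (c : F) (k : ℕ) (z : DF F) :
    c ^ (k + 1) • S.d z = (k + 1) • c • S.d (c ^ k • z) - k • S.d (c ^ (k + 1) • z) := by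
  rw [S.d_smul, S.d_smul, smul_add, ← smul_mul_assoc, smul_dForm_pow, dForm_pow,
    Nat.add_sub_cancel, smul_mul_assoc, smul_mul_assoc, smul_smul, ← pow_succ']
  push_cast
  module

variable (n : ℕ)

theorem pow_smul_d_mem_closure (c : F) (k : ℕ) {z : DF F} (hz : z ∈ omegaPred F n) :
    c ^ k • S.d z ∈ AddSubgroup.closure ((hRel S n : Set (DF F)) ∪
      { x | ∃ z ∈ omegaPred F n, x = c • S.d z }) := by
  set G := AddSubgroup.closure ((hRel S n : Set (DF F)) ∪
    { x | ∃ z ∈ omegaPred F n, x = c • S.d z })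
  have hd : ∀ y ∈ omegaPred F n, S.d y ∈ G := fun y hy =>
    AddSubgroup.subset_closure (Or.inl (AddSubgroup.mem_sup_right ⟨y, hy, rfl⟩))
  have hcd : ∀ y ∈ omegaPred F n, c • S.d y ∈ G := fun y hy =>
    AddSubgroup.subset_closure (Or.inr ⟨y, hy, rfl⟩)
  cases k with
  | zero => rw [pow_zero, one_smul]; exact hd z hz
  | succ k =>
    rw [S.pow_succ_smul_d]
    exact sub_mem (nsmul_mem (hcd _ (Submodule.smul_mem _ _ hz)) _)
      (nsmul_mem (hd _ (Submodule.smul_mem _ _ hz)) _)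

theorem smul_d_mem_closure_of_mem [CharP F p] {a c : F}
    (ha : a ∈ Subsemiring.closure (Set.range (· ^ p) ∪ {c})) {z : DF F} (hz : z ∈ omegaPred F n) :
    a • S.d z ∈ AddSubgroup.closure ((hRel S n : Set (DF F)) ∪
      { x | ∃ z ∈ omegaPred F n, x = c • S.d z }) := by
  rw [Subsemiring.mem_closure_iff] at ha
  induction ha using AddSubmonoid.closure_induction with
  | mem y hy =>
    obtain ⟨e, k, rfl⟩ := Submonoid.exists_eq_pow_mul_pow_of_mem_closure hy
    rw [mul_comm, mul_smul, ← S.d_pow_char_smul]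
    exact S.pow_smul_d_mem_closure n c k (Submodule.smul_mem _ _ hz)
  | zero => rw [zero_smul]; exact zero_mem _
  | add u v _ _ hu hv => rw [add_smul]; exact add_mem hu hv

variable {r : ℕ} (b : Fin r → F) (m : Fin r → ℕ)

theorem kGroup_le_closure [CharP F p] {c : F} (a : Fin r → F)
    (ha : ∀ i, a i ∈ Subsemiring.closure (Set.range (· ^ p) ∪ {c}))
    (hb : ∀ i, b i = a i ^ p ^ (m i - 1)) :
    kGroup S b m n ≤ AddSubgroup.closure ((hRel S n : Set (DF F)) ∪
      { x | ∃ z ∈ omegaPred F n, x = c • S.d z }) := by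
  refine (AddSubgroup.closure_le _).2 ?_
  rintro y (hy | ⟨i, z, hz, rfl⟩ | ⟨t, k, -, -, hk, v, hv, rfl⟩)
  · exact AddSubgroup.subset_closure (Or.inl hy)
  · rw [hb i]
    exact S.smul_d_mem_closure_of_mem n (pow_mem (ha i) _) hz
  · choose l hl using fun i => Nat.pow_dvd_mul_pow_sub_one (hk i).2
    have hprod : ∏ i, b i ^ k i = (∏ i, a i ^ l i) ^ p ^ t := by
      rw [← Finset.prod_pow]
      refine Finset.prod_congr rfl fun i _ => ?_
      rw [hb i, ← pow_mul, ← pow_mul, mul_comm, hl i, mul_comm]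
    have hrel := S.pow_smul_spIter_sub_smul_mem_hRel (S.d_mem_omegaPow hv) (∏ i, a i ^ l i) t
    rw [hprod, ← sub_add_cancel (_ • spIter S t (S.d v)) ((∏ i, a i ^ l i) • S.d v)]
    exact add_mem (AddSubgroup.subset_closure (Or.inl hrel))
      (S.smul_d_mem_closure_of_mem n (prod_mem fun i _ => pow_mem (ha i) _) hv)

theorem closure_le_kGroup [CharP F p] (hp : 1 < p) {j : Fin r} (hmj : 1 ≤ m j) {c : F}
    (hbj : b j = c ^ p ^ (m j - 1)) :
    AddSubgroup.closure ((hRel S n : Set (DF F)) ∪ { x | ∃ z ∈ omegaPred F n, x = c • S.d z }) ≤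
      kGroup S b m n := by
  refine (AddSubgroup.closure_le _).2 ?_
  rintro y (hy | ⟨z, hz, rfl⟩)
  · exact AddSubgroup.subset_closure (Or.inl hy)
  obtain hmj | hmj := hmj.eq_or_lt
  · refine AddSubgroup.subset_closure (Or.inr (Or.inl ⟨j, z, hz, ?_⟩))
    rw [hbj, ← hmj, Nat.sub_self, pow_zero, pow_one]
  set t := m j - 1
  set k : Fin r → ℕ := Pi.single j 1
  have hk : ∀ i, k i < p ^ t ∧ p ^ (t + 1 - m i) ∣ k i := by
    intro i
    rcases eq_or_ne i j with rfl | hij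
    · simp [k, Nat.one_lt_pow (by omega : t ≠ 0) hp, t, show m i - 1 + 1 - m i = 0 by omega]
    · simp [k, hij, pow_pos (zero_lt_one.trans hp)]
  have hprod : ∏ i, b i ^ k i = b j := by
    rw [Finset.prod_eq_single j (fun i _ hij => by simp [k, hij]) (by simp)]
    simp [k]
  have hgen : b j • spIter S t (S.d z) ∈ kGroup S b m n :=
    AddSubgroup.subset_closure (Or.inr (Or.inr ⟨t, k, by omega,
      (by omega : t < m j).trans_le (Finset.le_sup (Finset.mem_univ j)), hk, z, hz, by rw [hprod]⟩))
  have hrel := S.pow_smul_spIter_sub_smul_mem_hRel (S.d_mem_omegaPow hz) c t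
  rw [hbj] at hgen
  rw [← sub_sub_cancel (c ^ p ^ t • spIter S t (S.d z)) (c • S.d z)]
  exact sub_mem hgen (AddSubgroup.subset_closure (Or.inl hrel))

theorem kGroup_eq_of_sup_eq_one (h : Finset.univ.sup m = 1) :
    kGroup S b m n = AddSubgroup.closure ((hRel S n : Set (DF F)) ∪
      { x | ∃ i : Fin r, ∃ z ∈ omegaPred F n, x = b i • S.d z }) := by
  have hgens : kGens S b m n = { x | ∃ i : Fin r, ∃ z ∈ omegaPred F n, x = b i • S.d z } := by
    refine Set.union_eq_left.2 ?_
    rintro _ ⟨t, k, ht, hlt, -⟩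
    omega
  rw [kGroup, hgens]

end DiffStr

section FieldTheory

open IntermediateField

variable {F E : Type*} [Field F] [Field E] [Algebra F E]

theorem exists_not_mem_range_of_adjoin_eq_top {ι : Type*} {β : ι → E}
    (hgen : Algebra.adjoin F (Set.range β) = ⊤) (h : Module.finrank F E ≠ 1) :
    ∃ i, β i ∉ (algebraMap F E).range := by
  by_contra! hall
  refine h (Subalgebra.bot_eq_top_iff_finrank_eq_one.1 (eq_top_iff.2 ?_))
  rw [← hgen, Algebra.adjoin_le_iff]
  rintro _ ⟨i, rfl⟩
  exact Algebra.mem_bot.2 (hall i)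

theorem adjoin_simple_eq_top_of_finrank_prime [FiniteDimensional F E]
    (h : (Module.finrank F E).Prime) {x : E} (hx : x ∉ (algebraMap F E).range) :
    Algebra.adjoin F {x} = ⊤ := by
  have hdvd : Module.finrank F F⟮x⟯ ∣ Module.finrank F E := by
    simpa using finrank_dvd_of_le_right (le_top : F⟮x⟯ ≤ ⊤)
  have hne : Module.finrank F F⟮x⟯ ≠ 1 := by
    rwa [ne_eq, IntermediateField.finrank_eq_one_iff, adjoin_simple_eq_bot_iff, mem_bot,
      ← RingHom.coe_range]
  have htop : F⟮x⟯ = ⊤ := eq_of_le_of_finrank_eq le_top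
    (by simpa using (h.eq_one_or_self_of_dvd _ hdvd).resolve_left hne)
  rw [← adjoin_simple_toSubalgebra_of_isAlgebraic (Algebra.IsAlgebraic.isAlgebraic x), htop,
    top_toSubalgebra]

variable {p : ℕ}

theorem isPurelyInseparable_of_adjoin_eq_top [ExpChar F p] {ι : Type*} {β : ι → E}
    (hβ : ∀ i, ∃ k, β i ^ p ^ k ∈ (algebraMap F E).range)
    (hgen : Algebra.adjoin F (Set.range β) = ⊤) : IsPurelyInseparable F E := by
  rw [isPurelyInseparable_iff_perfectClosure_eq_top, ← IntermediateField.toSubalgebra_inj,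
    IntermediateField.top_toSubalgebra, eq_top_iff, ← hgen, Algebra.adjoin_le_iff]
  rintro _ ⟨i, rfl⟩
  exact (mem_perfectClosure_iff_pow_mem p).2 (hβ i)

theorem pow_mem_range_of_finrank_eq [ExpChar F p] [IsPurelyInseparable F E] (hp : p.Prime)
    (h : Module.finrank F E = p) (y : E) : y ^ p ∈ (algebraMap F E).range := by
  have : FiniteDimensional F E := Module.finite_of_finrank_pos (h ▸ hp.pos)
  have hdvd : p ^ IsPurelyInseparable.elemExponent F y ∣ p ^ 1 := by
    rw [← IsPurelyInseparable.minpoly_natDegree_eq' F p, pow_one, ← h]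
    exact minpoly.degree_dvd (Algebra.IsIntegral.isIntegral y)
  have hle := (Nat.pow_dvd_pow_iff_le_right hp.one_lt).1 hdvd
  rw [← pow_one p, ← Nat.sub_add_cancel hle, pow_add, pow_mul']
  exact pow_mem (IsPurelyInseparable.elemExponent_def' F p y) _

theorem exists_pow_eq_of_mem_adjoin_simple [ExpChar E p] {x y : E} {c : F}
    (hc : algebraMap F E c = x ^ p) (hy : y ∈ Algebra.adjoin F {x}) :
    ∃ a ∈ Subsemiring.closure (Set.range (· ^ p) ∪ {c}), algebraMap F E a = y ^ p := by
  induction hy using Algebra.adjoin_induction with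
  | mem y hy =>
    rw [Set.mem_singleton_iff.1 hy]
    exact ⟨c, Subsemiring.subset_closure (Or.inr rfl), hc⟩
  | algebraMap e => exact ⟨e ^ p, Subsemiring.subset_closure (Or.inl ⟨e, rfl⟩), map_pow _ _ _⟩
  | add y y' _ _ hy hy' =>
    obtain ⟨a, ha, hay⟩ := hy
    obtain ⟨a', ha', hay'⟩ := hy'
    exact ⟨a + a', add_mem ha ha', by rw [map_add, hay, hay', add_pow_expChar]⟩
  | mul y y' _ _ hy hy' =>
    obtain ⟨a, ha, hay⟩ := hy
    obtain ⟨a', ha', hay'⟩ := hy'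
    exact ⟨a * a', mul_mem ha ha', by rw [map_mul, hay, hay', mul_pow]⟩

theorem exists_eq_pow_pow_of_finrank_eq [ExpChar F p] [ExpChar E p] (hp : p.Prime)
    (h : Module.finrank F E = p) {r : ℕ} {b : Fin r → F} {m : Fin r → ℕ} (hm : ∀ i, 1 ≤ m i)
    {β : Fin r → E} (hβ : ∀ i, β i ^ p ^ m i = algebraMap F E (b i))
    (hgen : Algebra.adjoin F (Set.range β) = ⊤) :
    ∃ (j : Fin r) (c : F), (¬ ∃ y : F, y ^ p = c) ∧ b j = c ^ p ^ (m j - 1) ∧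
      ∀ i, ∃ a ∈ Subsemiring.closure (Set.range (· ^ p) ∪ {c}), b i = a ^ p ^ (m i - 1) := by
  have : FiniteDimensional F E := Module.finite_of_finrank_pos (h ▸ hp.pos)
  have : IsPurelyInseparable F E :=
    isPurelyInseparable_of_adjoin_eq_top (fun i => ⟨m i, hβ i ▸ RingHom.mem_range_self _ _⟩) hgen
  obtain ⟨j, hj⟩ := exists_not_mem_range_of_adjoin_eq_top hgen (h ▸ hp.ne_one)
  obtain ⟨c, hc⟩ := pow_mem_range_of_finrank_eq hp h (β j)
  have hb : ∀ i {a : F}, algebraMap F E a = β i ^ p → b i = a ^ p ^ (m i - 1) := by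
    intro i a ha
    apply (algebraMap F E).injective
    rw [← hβ i, map_pow, ha, ← pow_mul, ← pow_succ', Nat.sub_add_cancel (hm i)]
  refine ⟨j, c, ?_, hb j hc, fun i => ?_⟩
  · rintro ⟨y, rfl⟩
    refine hj ⟨y, frobenius_inj E p ?_⟩
    rw [frobenius_def, frobenius_def, ← map_pow, hc]
  · have hβi : β i ∈ Algebra.adjoin F {β j} := by
      rw [adjoin_simple_eq_top_of_finrank_prime (h ▸ hp) hj]
      exact Algebra.mem_top
    obtain ⟨a, ha, hai⟩ := exists_pow_eq_of_mem_adjoin_simple hc hβi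
    exact ⟨a, ha, hb i hai⟩

end FieldTheory

theorem kGroup_degree_p_and_exponent_one_general
    (p : ℕ) (hp : p.Prime) (F E : Type*) [Field F] [Field E] [Algebra F E]
    [CharP F p] [CharP E p]
    (S : DiffStr p F) (r : ℕ) (b : Fin r → F) (m : Fin r → ℕ)
    (hm : ∀ i, 1 ≤ m i)
    (β : Fin r → E) (hβ : ∀ i, β i ^ p ^ m i = algebraMap F E (b i))
    (hgen : Algebra.adjoin F (Set.range β) = ⊤) (n : ℕ) :
    (Module.finrank F E = p →
      ∃ (j : Fin r) (c : F), (¬ ∃ y : F, y ^ p = c) ∧ b j = c ^ p ^ (m j - 1) ∧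
        kGroup S b m n = AddSubgroup.closure ((hRel S n : Set (DF F)) ∪
          { x | ∃ z ∈ omegaPred F n, x = c • S.d z })) ∧
    (Finset.univ.sup m = 1 →
      kGroup S b m n = AddSubgroup.closure ((hRel S n : Set (DF F)) ∪
        { x | ∃ i : Fin r, ∃ z ∈ omegaPred F n, x = b i • S.d z })) := by
  have : Fact p.Prime := ⟨hp⟩
  refine ⟨fun hdim => ?_, S.kGroup_eq_of_sup_eq_one n b m⟩
  obtain ⟨j, c, hc, hbj, hpow⟩ := exists_eq_pow_pow_of_finrank_eq hp hdim hm hβ hgen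
  choose a ha hba using hpow
  exact ⟨j, c, hc, hbj, le_antisymm (S.kGroup_le_closure n b m a ha hba)
    (S.closure_le_kGroup n b m hp.one_lt (hm j) hbj)⟩

/-- **Lemma 3.8 (378).** Let `(b₁,m₁),…,(b_r,m_r) ∈ F^* × ℕ_{>0}` and let
`E = F(b₁^{1/p^{m₁}},…,b_r^{1/p^{m_r}})`.
(i) If `[E : F] = p`, then there are `j` and `c ∈ F∖F^p` with `bⱼ = c^{p^{mⱼ−1}}` and
`K_F((b₁,m₁),…,(b_r,m_r)) = image of c·d(Ω_F^{n-1})`.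
(ii) If `max{m₁,…,m_r} = 1`, then `K_F((b₁,m₁),…,(b_r,m_r)) = Σᵢ image of bᵢ·d(Ω_F^{n-1})`. -/
theorem kGroup_degree_p_and_exponent_one
    (p : ℕ) (hp : p.Prime) (F E : Type*) [Field F] [Field E] [Algebra F E]
    [CharP F p] [CharP E p]
    (S : DiffStr p F) (r : ℕ) (b : Fin r → F) (m : Fin r → ℕ)
    (hb : ∀ i, b i ≠ 0) (hm : ∀ i, 1 ≤ m i)
    (β : Fin r → E) (hβ : ∀ i, β i ^ p ^ m i = algebraMap F E (b i))
    (hgen : Algebra.adjoin F (Set.range β) = ⊤) (n : ℕ) :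
    (Module.finrank F E = p →
      ∃ (j : Fin r) (c : F), (¬ ∃ y : F, y ^ p = c) ∧ b j = c ^ p ^ (m j - 1) ∧
        kGroup S b m n = AddSubgroup.closure ((hRel S n : Set (DF F)) ∪
          { x | ∃ z ∈ omegaPred F n, x = c • S.d z })) ∧
    (Finset.univ.sup m = 1 →
      kGroup S b m n = AddSubgroup.closure ((hRel S n : Set (DF F)) ∪
        { x | ∃ i : Fin r, ∃ z ∈ omegaPred F n, x = b i • S.d z })) :=
  kGroup_degree_p_and_exponent_one_general p hp F E S r b m hm β hβ hgen n
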